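/- arXiv:1101.4159 — 5 statements merged into one kernel-verified Lean document; each statement's English description precedes it below -/
import Mathlib

section
/- The permutation σ_SWAP of ZMod 3 × ZMod 3 defined by σ_SWAP (m, n) = (n, m) does not belong to the subgroup of the permutation group of ZMod 3 × ZMod 3 generated by the two permutations σ_CNOT1 (m, n) = (m, n + m) and σ_CNOT2 (m, n) = (m + n, n); in particular, no finite composition of instances of the two-qutrit CNOT gates equals the two-qutrit SWAP gate. -/
/-- The two-qudit CNOT1 gate as a permutation of `ZMod d × ZMod d`: `(m, n) ↦ (m, n + m)`. -/
def cnot1 (d : ℕ) : Equiv.Perm (ZMod d × ZMod d) where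
  toFun p := (p.1, p.2 + p.1)
  invFun p := (p.1, p.2 - p.1)
  left_inv p := by simp
  right_inv p := by simp

/-- The two-qudit CNOT2 gate as a permutation of `ZMod d × ZMod d`: `(m, n) ↦ (m + n, n)`. -/
def cnot2 (d : ℕ) : Equiv.Perm (ZMod d × ZMod d) where
  toFun p := (p.1 + p.2, p.2)
  invFun p := (p.1 - p.2, p.2)
  left_inv p := by simp
  right_inv p := by simp

/-- The two-qudit SWAP gate as a permutation of `ZMod d × ZMod d`: `(m, n) ↦ (n, m)`. -/
def swapGate (d : ℕ) : Equiv.Perm (ZMod d × ZMod d) := Equiv.prodComm _ _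

/-- The two-qutrit SWAP permutation does not lie in the subgroup of the
permutation group of ZMod 3 × ZMod 3 generated by the two-qutrit CNOT1 and
CNOT2 permutations: no finite composition of two-qutrit CNOT gates equals
the two-qutrit SWAP gate. -/
theorem swap_not_in_closure_cnots_three :
    swapGate 3 ∉ Subgroup.closure ({cnot1 3, cnot2 3} :
      Set (Equiv.Perm (ZMod 3 × ZMod 3))) := by
  intro h
  have hle : Subgroup.closure ({cnot1 3, cnot2 3} :
      Set (Equiv.Perm (ZMod 3 × ZMod 3))) ≤ Equiv.Perm.sign.ker := by
    rw [Subgroup.closure_le]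
    rintro x (rfl | rfl) <;> rw [SetLike.mem_coe, MonoidHom.mem_ker] <;> decide
  have := hle h
  rw [MonoidHom.mem_ker] at this
  revert this
  decide
end

section
/- For every odd prime p, the permutation σ_CNOT1 of ZMod p × ZMod p defined by σ_CNOT1 (m, n) = (m, n + m) is even (sign +1), while for p = 2 this permutation is odd (sign −1). -/
lemma addRight_isCycle {p : ℕ} [Fact p.Prime] {m : ZMod p} (hm : m ≠ 0) :
    (Equiv.addRight m : Equiv.Perm (ZMod p)).IsCycle := by
  refine ⟨0, by simpa using hm, fun y _ => ?_⟩
  refine ⟨((y * m⁻¹).val : ℤ), ?_⟩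
  have : ∀ n : ℕ, ((Equiv.addRight m : Equiv.Perm (ZMod p)) ^ n) 0 = n * m := by
    intro n
    induction n with
    | zero => simp
    | succ k ih => simp [pow_succ, ih, add_mul]; ring
  simp only [zpow_natCast, this]
  rw [ZMod.natCast_val, ZMod.cast_id]
  field_simp

lemma addRight_support {p : ℕ} [Fact p.Prime] {m : ZMod p} (hm : m ≠ 0) :
    (Equiv.addRight m : Equiv.Perm (ZMod p)).support = Finset.univ := by
  ext y
  simp [Equiv.Perm.mem_support, hm]

lemma sign_addRight {p : ℕ} [Fact p.Prime] (m : ZMod p) :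
    Equiv.Perm.sign (Equiv.addRight m : Equiv.Perm (ZMod p)) = -(-1 : ℤˣ)^p ∨ m = 0 := by
  by_cases hm : m = 0
  · exact Or.inr hm
  · left
    rw [(addRight_isCycle hm).sign, addRight_support hm, Finset.card_univ, ZMod.card]


lemma sign_cnot1_two : Equiv.Perm.sign (cnot1 2) = -1 := by decide

/-- For every odd prime p, the permutation σ_CNOT1 of ZMod p × ZMod p is even
(sign +1), while for p = 2 it is odd (sign −1). -/
theorem sign_cnot1_prime (p : ℕ) [Fact p.Prime] :
    (Odd p → Equiv.Perm.sign (cnot1 p) = 1) ∧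
    (p = 2 → Equiv.Perm.sign (cnot1 p) = -1) := by
  have key : Equiv.Perm.sign (cnot1 p) = ∏ m : ZMod p, Equiv.Perm.sign (Equiv.addRight m : Equiv.Perm (ZMod p)) := by
    have : cnot1 p = Equiv.prodCongrRight (fun m : ZMod p => Equiv.addRight m) := by
      ext x <;> rfl
    rw [this, Equiv.Perm.sign_prodCongrRight]
  constructor
  · intro hodd
    rw [key]
    apply Finset.prod_eq_one
    intro m _
    rcases sign_addRight m with h | h
    · rw [h, hodd.neg_one_pow]; simp
    · simp [h]
  · intro hp2
    subst hp2
    exact sign_cnot1_two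
end

section
/- For every odd prime p, the permutation σ_CNOT2 of ZMod p × ZMod p defined by σ_CNOT2 (m, n) = (m + n, n) is even (sign +1), while for p = 2 this permutation is odd (sign −1). -/
lemma sign_cnot2_two : Equiv.Perm.sign (cnot2 2) = -1 := by
  have h : cnot2 2 = Equiv.swap ((1 : ZMod 2), (1 : ZMod 2)) ((0 : ZMod 2), (1 : ZMod 2)) := by
    decide
  rw [h, Equiv.Perm.sign_swap (by decide)]

/-- For every odd prime p, the permutation σ_CNOT2 of ZMod p × ZMod p is even
(sign +1), while for p = 2 it is odd (sign −1). -/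
theorem sign_cnot2_prime (p : ℕ) [Fact p.Prime] :
    (Odd p → Equiv.Perm.sign (cnot2 p) = 1) ∧
    (p = 2 → Equiv.Perm.sign (cnot2 p) = -1) := by
  constructor
  · intro hodd
    have hpow : ∀ k : ℕ, ∀ q : ZMod p × ZMod p,
        ((cnot2 p) ^ k) q = (q.1 + (k : ZMod p) * q.2, q.2) := by
      intro k
      induction k with
      | zero => intro q; simp
      | succ n ih =>
        intro q
        rw [pow_succ', Equiv.Perm.mul_apply, ih q]
        simp [cnot2, add_mul, add_assoc, add_comm, add_left_comm]
    have h1 : (cnot2 p) ^ p = 1 := by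
      ext q
      · rw [hpow p q]; simp [ZMod.natCast_self]
      · rw [hpow p q]; simp [ZMod.natCast_self]
    have h2 : (Equiv.Perm.sign (cnot2 p)) ^ p = 1 := by
      rw [← map_pow, h1, map_one]
    rcases Int.units_eq_one_or (Equiv.Perm.sign (cnot2 p)) with h | h
    · exact h
    · rw [h, hodd.neg_one_pow] at h2
      exact absurd h2 (by decide)
  · intro hp
    subst hp
    exact sign_cnot2_two
end

section
/- For every natural number d with d ≡ 3 (mod 4), the permutation σ_SWAP of ZMod d × ZMod d defined by σ_SWAP (m, n) = (n, m) does not belong to the subgroup of the permutation group of ZMod d × ZMod d generated by the two permutations σ_CNOT1 (m, n) = (m, n + m) and σ_CNOT2 (m, n) = (m + n, n); in particular, no finite composition of instances of the generalised CNOT gates realises the two-qudit SWAP gate in such dimensions. -/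
def sl2Perm (R : Type*) [CommRing R] : Subgroup (Equiv.Perm (R × R)) where
  carrier := {σ | ∃ a b c e : R, a * e - b * c = 1 ∧
    ∀ p : R × R, σ p = (a * p.1 + b * p.2, c * p.1 + e * p.2)}
  one_mem' := ⟨1, 0, 0, 1, by ring, fun p => by simp⟩
  mul_mem' := by
    rintro σ τ ⟨a, b, c, e, hdet, hσ⟩ ⟨a', b', c', e', hdet', hτ⟩
    refine ⟨a * a' + b * c', a * b' + b * e', c * a' + e * c', c * b' + e * e', ?_, fun p => ?_⟩
    · linear_combination (a' * e' - b' * c') * hdet + hdet'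
    · rw [Equiv.Perm.mul_apply, hτ, hσ, Prod.mk.injEq]
      constructor <;> ring
  inv_mem' := by
    rintro σ ⟨a, b, c, e, hdet, hσ⟩
    refine ⟨e, -b, -c, a, by linear_combination hdet, fun p => σ.injective ?_⟩
    rw [Equiv.Perm.coe_inv, Equiv.apply_symm_apply, hσ, Prod.ext_iff]
    constructor
    · linear_combination -p.1 * hdet
    · linear_combination -p.2 * hdet

theorem two_eq_zero_of_prodComm_mem_sl2Perm {R : Type*} [CommRing R]
    (h : Equiv.prodComm R R ∈ sl2Perm R) :
    (2 : R) = 0 := by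
  obtain ⟨a, b, c, e, hdet, hσ⟩ := h
  have h₁ := hσ (1, 0)
  have h₀ := hσ (0, 1)
  simp only [Equiv.prodComm_apply, Prod.swap_prod_mk, mul_one, mul_zero, add_zero, zero_add,
    Prod.mk.injEq] at h₁ h₀
  obtain ⟨rfl, rfl⟩ := h₁
  obtain ⟨rfl, rfl⟩ := h₀
  linear_combination -hdet

theorem cnot1_mem_sl2Perm (d : ℕ) : cnot1 d ∈ sl2Perm (ZMod d) :=
  ⟨1, 0, 1, 1, by ring, fun p => by simp [cnot1, add_comm]⟩

theorem cnot2_mem_sl2Perm (d : ℕ) : cnot2 d ∈ sl2Perm (ZMod d) :=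
  ⟨1, 1, 0, 1, by ring, fun p => by simp [cnot2]⟩

theorem closure_cnots_le_sl2Perm (d : ℕ) :
    Subgroup.closure ({cnot1 d, cnot2 d} : Set (Equiv.Perm (ZMod d × ZMod d))) ≤
      sl2Perm (ZMod d) :=
  (Subgroup.closure_le _).2 <| Set.pair_subset (cnot1_mem_sl2Perm d) (cnot2_mem_sl2Perm d)

theorem ZMod.two_ne_zero_of_two_lt {d : ℕ} (hd : 2 < d) : (2 : ZMod d) ≠ 0 := by
  intro h
  have hdvd : d ∣ 2 := (ZMod.natCast_eq_zero_iff 2 d).1 (by exact_mod_cast h)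
  have := Nat.le_of_dvd two_pos hdvd
  omega

/-- For every d ≡ 3 (mod 4), the two-qudit SWAP permutation does not lie in the
subgroup of the permutation group of ZMod d × ZMod d generated by the generalised
CNOT1 and CNOT2 permutations: no finite composition of generalised CNOT gates
realises the two-qudit SWAP gate in such dimensions. -/
theorem swap_not_in_closure_cnots (d : ℕ) (hd : d % 4 = 3) :
    swapGate d ∉ Subgroup.closure ({cnot1 d, cnot2 d} :
      Set (Equiv.Perm (ZMod d × ZMod d))) := fun hswap =>
  ZMod.two_ne_zero_of_two_lt (by omega) <|
    two_eq_zero_of_prodComm_mem_sl2Perm (closure_cnots_le_sl2Perm d hswap)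
end

section
/- For every odd natural number d ≥ 1, any permutation of ZMod d × ZMod d lying in the subgroup generated by σ_CNOT1 (m, n) = (m, n + m) and σ_CNOT2 (m, n) = (m + n, n) is an even permutation. -/
lemma cnot1_pow (d : ℕ) (k : ℕ) (p : ZMod d × ZMod d) :
    ((cnot1 d) ^ k) p = (p.1, p.2 + (k : ZMod d) * p.1) := by
  induction k with
  | zero => simp
  | succ n ih =>
      rw [pow_succ', Equiv.Perm.mul_apply, ih]
      simp [cnot1, add_mul, add_assoc]

lemma cnot2_pow (d : ℕ) (k : ℕ) (p : ZMod d × ZMod d) :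
    ((cnot2 d) ^ k) p = (p.1 + (k : ZMod d) * p.2, p.2) := by
  induction k with
  | zero => simp
  | succ n ih =>
      rw [pow_succ', Equiv.Perm.mul_apply, ih]
      simp [cnot2, add_mul, add_assoc]

lemma sign_eq_one_of_pow_odd {α : Type*} [Fintype α] [DecidableEq α]
    (σ : Equiv.Perm α) (d : ℕ) (hd : Odd d) (h : σ ^ d = 1) :
    Equiv.Perm.sign σ = 1 := by
  have h1 : (Equiv.Perm.sign σ) ^ d = 1 := by
    rw [← map_pow, h, map_one]
  rcases Int.units_eq_one_or (Equiv.Perm.sign σ) with h2 | h2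
  · exact h2
  · rw [h2, hd.neg_one_pow] at h1
    exact absurd h1 (by decide)

/-- For every odd natural number d ≥ 1 (oddness already forces d ≥ 1, and `NeZero d`
is required for `ZMod d × ZMod d` to be a finite type), any permutation of
ZMod d × ZMod d lying in the subgroup generated by σ_CNOT1 and σ_CNOT2 is even. -/
theorem closure_cnots_even (d : ℕ) [NeZero d] (hd : Odd d) :
    ∀ σ ∈ Subgroup.closure ({cnot1 d, cnot2 d} :
        Set (Equiv.Perm (ZMod d × ZMod d))),
      Equiv.Perm.sign σ = 1 := by
  have h1 : (cnot1 d) ^ d = 1 := by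
    ext p <;> simp [cnot1_pow]
  have h2 : (cnot2 d) ^ d = 1 := by
    ext p <;> simp [cnot2_pow]
  intro σ hσ
  induction hσ using Subgroup.closure_induction with
  | mem x hx =>
      rcases hx with rfl | rfl
      · exact sign_eq_one_of_pow_odd _ d hd h1
      · exact sign_eq_one_of_pow_odd _ d hd h2
  | one => simp
  | mul x y _ _ hx hy => rw [map_mul, hx, hy, one_mul]
  | inv x _ hx => rw [map_inv, hx, inv_one]
end
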